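/- arXiv:1505.06224 — 3 statements merged into one kernel-verified Lean document; each statement's English description precedes it below -/
import Mathlib

section
/- Let (B, ·) be a group and α₁, α₂, α₃ be bijections of B such that α₁(x·y) = α₂(x)·α₃(y) for all x, y ∈ B. Then α₁, α₂, α₃ are all holomorphisms of (B, ·), i.e., each αᵢ satisfies αᵢ(x·y⁻¹·z) = αᵢ(x)·(αᵢ(y))⁻¹·αᵢ(z) for all x, y, z ∈ B. -/
def IsHolomorphism {B : Type*} [Group B] (α : B → B) : Prop :=
  Function.Bijective α ∧ ∀ x y z, α (x * y⁻¹ * z) = α x * (α y)⁻¹ * α z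

theorem stmt_5 {B : Type*} [Group B] (α₁ α₂ α₃ : B → B)
    (h₁ : Function.Bijective α₁) (h₂ : Function.Bijective α₂)
    (h₃ : Function.Bijective α₃)
    (h : ∀ x y, α₁ (x * y) = α₂ x * α₃ y) :
    IsHolomorphism α₁ ∧ IsHolomorphism α₂ ∧ IsHolomorphism α₃ := by
  set a := α₁ 1 with ha
  have h2 : ∀ x, α₂ x = α₁ x * (α₃ 1)⁻¹ := by
    intro x
    have := h x 1
    rw [mul_one] at this
    rw [this]; group
  have h3 : ∀ y, α₃ y = (α₂ 1)⁻¹ * α₁ y := by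
    intro y
    have := h 1 y
    rw [one_mul] at this
    rw [this]; group
  have hone : a = α₂ 1 * α₃ 1 := by rw [ha, ← h 1 1, mul_one]
  have key : ∀ x y, α₁ (x * y) = α₁ x * a⁻¹ * α₁ y := by
    intro x y
    rw [h x y, h2 x, h3 y, hone]
    group
  have hinv : ∀ y, α₁ y⁻¹ = a * (α₁ y)⁻¹ * a := by
    intro y
    have := key y y⁻¹
    rw [mul_inv_cancel, ← ha] at this
    calc α₁ y⁻¹ = (α₁ y * a⁻¹)⁻¹ * (α₁ y * a⁻¹ * α₁ y⁻¹) := by group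
      _ = (α₁ y * a⁻¹)⁻¹ * a := by rw [← this]
      _ = a * (α₁ y)⁻¹ * a := by group
  have hol1 : ∀ x y z, α₁ (x * y⁻¹ * z) = α₁ x * (α₁ y)⁻¹ * α₁ z := by
    intro x y z
    rw [key, key, hinv]
    group
  refine ⟨⟨h₁, hol1⟩, ⟨h₂, ?_⟩, ⟨h₃, ?_⟩⟩
  · intro x y z
    simp only [h2]
    rw [hol1]
    group
  · intro x y z
    simp only [h3]
    rw [hol1]
    group
end

section
/- Let (B, +) be an abelian group, φ₁, ψ₁, φ₂, ψ₂ automorphisms of (B, +), and c₁, c₂ ∈ B. Define f(x,y) = φ₁(x) + ψ₁(y) + c₁ and g(x,y) = φ₂(x) + ψ₂(y) + c₂. Then the pair (f, g) satisfies the equation f(g(x,y), g(u,v)) = g(f(x,u), f(y,v)) for all x, y, u, v if and only if φ₁φ₂ = φ₂φ₁, φ₁ψ₂ = ψ₂φ₁, ψ₁φ₂ = φ₂ψ₁, ψ₁ψ₂ = ψ₂ψ₁, and φ₁(c₂) + ψ₁(c₂) + c₁ = φ₂(c₁) + ψ₂(c₁) + c₂. -/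
theorem stmt_8 {B : Type*} [AddCommGroup B] (φ₁ ψ₁ φ₂ ψ₂ : B ≃+ B) (c₁ c₂ : B)
    (f g : B → B → B)
    (hf : ∀ x y, f x y = φ₁ x + ψ₁ y + c₁)
    (hg : ∀ x y, g x y = φ₂ x + ψ₂ y + c₂) :
    (∀ x y u v, f (g x y) (g u v) = g (f x u) (f y v)) ↔
      ((∀ x, φ₁ (φ₂ x) = φ₂ (φ₁ x)) ∧ (∀ x, φ₁ (ψ₂ x) = ψ₂ (φ₁ x)) ∧
       (∀ x, ψ₁ (φ₂ x) = φ₂ (ψ₁ x)) ∧ (∀ x, ψ₁ (ψ₂ x) = ψ₂ (ψ₁ x)) ∧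
       φ₁ c₂ + ψ₁ c₂ + c₁ = φ₂ c₁ + ψ₂ c₁ + c₂) := by
  have key : ∀ x y u v, f (g x y) (g u v) = g (f x u) (f y v) ↔
      φ₁ (φ₂ x) + φ₁ (ψ₂ y) + φ₁ c₂ + (ψ₁ (φ₂ u) + ψ₁ (ψ₂ v) + ψ₁ c₂) + c₁ =
      φ₂ (φ₁ x) + φ₂ (ψ₁ u) + φ₂ c₁ + (ψ₂ (φ₁ y) + ψ₂ (ψ₁ v) + ψ₂ c₁) + c₂ := by
    intro x y u v
    simp only [hf, hg, map_add]
  constructor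
  · intro h
    have h' : ∀ x y u v, φ₁ (φ₂ x) + φ₁ (ψ₂ y) + φ₁ c₂ + (ψ₁ (φ₂ u) + ψ₁ (ψ₂ v) + ψ₁ c₂) + c₁ =
        φ₂ (φ₁ x) + φ₂ (ψ₁ u) + φ₂ c₁ + (ψ₂ (φ₁ y) + ψ₂ (ψ₁ v) + ψ₂ c₁) + c₂ :=
      fun x y u v => (key x y u v).mp (h x y u v)
    have h0 := h' 0 0 0 0
    simp only [map_zero, add_zero, zero_add] at h0
    refine ⟨?_, ?_, ?_, ?_, ?_⟩
    · intro x
      have hx := h' x 0 0 0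
      simp only [map_zero, add_zero, zero_add] at hx
      linear_combination (norm := abel) hx - h0
    · intro x
      have hx := h' 0 x 0 0
      simp only [map_zero, add_zero, zero_add] at hx
      linear_combination (norm := abel) hx - h0
    · intro x
      have hx := h' 0 0 x 0
      simp only [map_zero, add_zero, zero_add] at hx
      linear_combination (norm := abel) hx - h0
    · intro x
      have hx := h' 0 0 0 x
      simp only [map_zero, add_zero, zero_add] at hx
      linear_combination (norm := abel) hx - h0
    · linear_combination (norm := abel) h0
  · rintro ⟨h1, h2, h3, h4, h5⟩ x y u v
    rw [key]
    linear_combination (norm := abel) h1 x + h2 y + h3 u + h4 v + h5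
end

section
/- Let (B, +) be an abelian group, φ₁, ψ₁, φ₂, ψ₂ automorphisms of (B, +), and c₁, c₂ ∈ B. Define f(x,y) = φ₁(x) + ψ₁(y) + c₁ and g(x,y) = φ₂(x) + ψ₂(y) + c₂. If φ₁φ₂ = ψ₂ψ₁, φ₂φ₁ = ψ₁ψ₂, φ₁ψ₂ = φ₂ψ₁, ψ₁φ₂ = ψ₂φ₁, and φ₁(c₂) + ψ₁(c₂) + c₁ = φ₂(c₁) + ψ₂(c₁) + c₂, then the pair (f, g) satisfies the paramediality equation f(g(x,y), g(u,v)) = g(f(v,y), f(u,x)) for all x, y, u, v ∈ B. -/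
theorem stmt_9 {B : Type*} [AddCommGroup B] (φ₁ ψ₁ φ₂ ψ₂ : B ≃+ B) (c₁ c₂ : B)
    (f g : B → B → B)
    (hf : ∀ x y, f x y = φ₁ x + ψ₁ y + c₁)
    (hg : ∀ x y, g x y = φ₂ x + ψ₂ y + c₂)
    (h1 : ∀ x, φ₁ (φ₂ x) = ψ₂ (ψ₁ x)) (h2 : ∀ x, φ₂ (φ₁ x) = ψ₁ (ψ₂ x))
    (h3 : ∀ x, φ₁ (ψ₂ x) = φ₂ (ψ₁ x)) (h4 : ∀ x, ψ₁ (φ₂ x) = ψ₂ (φ₁ x))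
    (hc : φ₁ c₂ + ψ₁ c₂ + c₁ = φ₂ c₁ + ψ₂ c₁ + c₂) :
    ∀ x y u v, f (g x y) (g u v) = g (f v y) (f u x) := by
  intro x y u v
  simp only [hf, hg, map_add, h1, h2, h3, h4]
  abel_nf
  have h := congrArg (· + (ψ₂ (ψ₁ x) + (φ₂ (ψ₁ y) + (ψ₂ (φ₁ u) + ψ₁ (ψ₂ v))))) hc
  abel_nf at h ⊢
  exact h
end
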